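/- Let $L \subseteq \overline{\mathbb{Q}}$ be a totally imaginary number field and $\Psi$ a CM-type of $L$ lifted from a CM-subfield. For $\tau \in G_{\mathbb{Q}}$, the set $\tau\Psi = \{\tau \circ \sigma : \sigma \in \Psi\}$ is again a CM-type of $L$ lifted from a CM-subfield, and for all $\tau_1, \tau_2 \in G_{\mathbb{Q}}$ the signs satisfy $\varepsilon_{\Psi}(\tau_1 \tau_2) = \varepsilon_{\tau_2\Psi}(\tau_1) \cdot \varepsilon_{\Psi}(\tau_2)$. -/
import Mathlib


/-!
STATEMENT 5: Let `L ⊆ ℚ̄` be a totally imaginary number field and `Ψ` a CM-type of `L`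
lifted from a CM-subfield.  For `τ ∈ G_ℚ`, the set `τΨ = {τ∘σ : σ ∈ Ψ}` is again a
CM-type of `L` lifted from a CM-subfield, and for all `τ₁, τ₂ ∈ G_ℚ` the signs satisfy
`ε_Ψ(τ₁τ₂) = ε_{τ₂Ψ}(τ₁) ⬝ ε_Ψ(τ₂)`.

For a lifted CM-type `Ψ` the projection `J_L → ⟨c⟩\J_L` onto conjugation-orbits is a
bijection on `Ψ`; `ε_Ψ(τ) ∈ {±1}` is the sign of the permutation of `⟨c⟩\J_L` given by
`⟨c⟩\J_L ≅ Ψ → τΨ → ⟨c⟩\J_L`.  Conjugating by the bijection `Ψ ≅ ⟨c⟩\J_L`, this is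
the sign of the permutation of `Ψ` sending `σ ∈ Ψ` to the unique element of `Ψ` in the
orbit `{τ∘σ, c∘τ∘σ}`, namely `τ∘σ` if `τ∘σ ∈ Ψ` and `c∘τ∘σ` otherwise; this is the
definition of `ε` used below (with value `1` in the degenerate case where this
assignment is not a permutation, which does not occur for lifted CM-types).
`ℚ̄` is an algebraic closure of `ℚ` with an embedding `emb` into `ℂ`, and `c` is
complex conjugation restricted to `ℚ̄`.
-/

open scoped Classical

variable {Qbar : Type*} [Field Qbar] [Algebra ℚ Qbar]

/-- the action of `Gal(ℚ̄/ℚ)` on embeddings `F ↪ ℚ̄`, by composition -/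
def gact {F : IntermediateField ℚ Qbar} (τ : Qbar ≃ₐ[ℚ] Qbar) (σ : ↥F →+* Qbar) :
    ↥F →+* Qbar :=
  (τ : Qbar →ₐ[ℚ] Qbar).toRingHom.comp σ

section CM

variable (c : Qbar ≃ₐ[ℚ] Qbar)

/-- `K` is a CM-field. -/
def IsCMField (K : IntermediateField ℚ Qbar) : Prop :=
  ∃ cK : ↥K ≃+* ↥K, cK ≠ RingEquiv.refl ↥K ∧
    ∀ (σ : ↥K →+* Qbar) (x : ↥K), σ (cK x) = c (σ x)

/-- `Φ` is a CM-type of `K`. -/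
def IsCMType {K : IntermediateField ℚ Qbar} (Φ : Set (↥K →+* Qbar)) : Prop :=
  Φ ∩ (gact c '' Φ) = ∅ ∧ Φ ∪ (gact c '' Φ) = Set.univ

/-- the inclusion `K → L` of intermediate fields, as a ring homomorphism -/
def incl {K L : IntermediateField ℚ Qbar} (hKL : K ≤ L) : ↥K →+* ↥L where
  toFun x := ⟨x.1, hKL x.2⟩
  map_one' := rfl
  map_mul' _ _ := rfl
  map_zero' := rfl
  map_add' _ _ := rfl

/-- the lift to `L` of a set of embeddings of a subfield `K ⊆ L` -/
def liftType {K L : IntermediateField ℚ Qbar} (hKL : K ≤ L)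
    (ΦK : Set (↥K →+* Qbar)) : Set (↥L →+* Qbar) :=
  {σ | σ.comp (incl hKL) ∈ ΦK}

/-- `Φ` is a CM-type of `L` lifted from a CM-subfield of `L`. -/
def IsLiftedCMType (L : IntermediateField ℚ Qbar) (Φ : Set (↥L →+* Qbar)) : Prop :=
  ∃ (K : IntermediateField ℚ Qbar) (hKL : K ≤ L) (ΦK : Set (↥K →+* Qbar)),
    IsCMField c K ∧ IsCMType c ΦK ∧ Φ = liftType hKL ΦK

/-- `L` is totally imaginary. -/
def TotallyImaginary (L : IntermediateField ℚ Qbar) : Prop :=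
  ∀ σ : ↥L →+* Qbar, gact c σ ≠ σ

/-- a system of lifts for `L`: `w_σ|_L = σ` and `c ∘ w_σ = w_{c∘σ}` -/
def IsLiftSystem (L : IntermediateField ℚ Qbar)
    (w : (↥L →+* Qbar) → (Qbar ≃ₐ[ℚ] Qbar)) : Prop :=
  (∀ (σ : ↥L →+* Qbar) (x : ↥L), w σ (x : Qbar) = σ x) ∧
  (∀ σ : ↥L →+* Qbar, c * w σ = w (gact c σ))

end CM

/-- the representative in `Ψ` of the conjugation-orbit of `τ∘σ` -/
noncomputable def epsFun (c τ : Qbar ≃ₐ[ℚ] Qbar) {L : IntermediateField ℚ Qbar}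
    (Ψ : Finset (↥L →+* Qbar)) (σ : ↥L →+* Qbar) : ↥L →+* Qbar :=
  if gact τ σ ∈ Ψ then gact τ σ else gact c (gact τ σ)

/-- the sign `ε_Ψ(τ) ∈ {±1}`: the sign of the permutation of `Ψ` (equivalently, of the
orbit set `⟨c⟩\J_L`) induced by `σ ↦ τ∘σ` followed by taking `Ψ`-representatives -/
noncomputable def eps (c : Qbar ≃ₐ[ℚ] Qbar) {L : IntermediateField ℚ Qbar}
    (Ψ : Finset (↥L →+* Qbar)) (τ : Qbar ≃ₐ[ℚ] Qbar) : ℤˣ :=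
  if h : ∃ e : Equiv.Perm {x // x ∈ Ψ},
      ∀ x : {x // x ∈ Ψ}, (e x : ↥L →+* Qbar) = epsFun c τ Ψ (x : ↥L →+* Qbar)
  then Equiv.Perm.sign h.choose
  else 1

section auxlemmas

open scoped Classical

variable {Qbar : Type*} [Field Qbar] [Algebra ℚ Qbar]

theorem gact_gact {F : IntermediateField ℚ Qbar} (τ τ' : Qbar ≃ₐ[ℚ] Qbar)
    (σ : ↥F →+* Qbar) : gact τ (gact τ' σ) = gact (τ * τ') σ := by
  ext x; simp [gact, AlgEquiv.mul_apply]

theorem gact_one {F : IntermediateField ℚ Qbar} (σ : ↥F →+* Qbar) :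
    gact (1 : Qbar ≃ₐ[ℚ] Qbar) σ = σ := by
  ext x; simp [gact]

theorem gact_cancel {F : IntermediateField ℚ Qbar} (τ : Qbar ≃ₐ[ℚ] Qbar)
    (σ : ↥F →+* Qbar) : gact τ⁻¹ (gact τ σ) = σ := by
  rw [gact_gact, inv_mul_cancel, gact_one]

theorem gact_cancel' {F : IntermediateField ℚ Qbar} (τ : Qbar ≃ₐ[ℚ] Qbar)
    (σ : ↥F →+* Qbar) : gact τ (gact τ⁻¹ σ) = σ := by
  rw [gact_gact, mul_inv_cancel, gact_one]

theorem gact_inj {F : IntermediateField ℚ Qbar} (τ : Qbar ≃ₐ[ℚ] Qbar) :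
    Function.Injective (gact (F := F) τ) := by
  intro a b h
  have h2 := congrArg (gact τ⁻¹) h
  rwa [gact_cancel, gact_cancel] at h2

theorem comp_incl {K L : IntermediateField ℚ Qbar} (hKL : K ≤ L)
    (τ : Qbar ≃ₐ[ℚ] Qbar) (σ : ↥L →+* Qbar) :
    (gact τ σ).comp (incl hKL) = gact τ (σ.comp (incl hKL)) := by
  ext x; rfl

theorem memK_iff (c : Qbar ≃ₐ[ℚ] Qbar) (hcc : c * c = 1)
    {K : IntermediateField ℚ Qbar} {ΦK : Set (↥K →+* Qbar)}
    (hΦ : IsCMType c ΦK) (φ : ↥K →+* Qbar) : φ ∈ ΦK ↔ gact c φ ∉ ΦK := by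
  obtain ⟨hd, hu⟩ := hΦ
  constructor
  · intro hφ hcφ
    have hm : φ ∈ ΦK ∩ (gact c '' ΦK) :=
      ⟨hφ, ⟨gact c φ, hcφ, by rw [gact_gact, hcc, gact_one]⟩⟩
    rw [hd] at hm; exact hm
  · intro hcφ
    have hm : φ ∈ ΦK ∪ (gact c '' ΦK) := hu ▸ Set.mem_univ φ
    rcases hm with h | ⟨ψ, hψ, rfl⟩
    · exact h
    · have hn : ψ ∉ ΦK := by rwa [gact_gact, hcc, gact_one] at hcφ
      exact absurd hψ hn

theorem gact_c_comm (c : Qbar ≃ₐ[ℚ] Qbar) {K : IntermediateField ℚ Qbar}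
    {cK : ↥K ≃+* ↥K} (hcK : ∀ (σ : ↥K →+* Qbar) (x : ↥K), σ (cK x) = c (σ x))
    (τ : Qbar ≃ₐ[ℚ] Qbar) (φ : ↥K →+* Qbar) :
    gact c (gact τ φ) = gact τ (gact c φ) := by
  ext x
  have h1 := hcK (gact τ φ) x
  have h2 := hcK φ x
  show c ((gact τ φ) x) = τ ((gact c φ) x)
  rw [← h1]
  show τ (φ (cK x)) = τ (c (φ x))
  rw [h2]

theorem lifted_mem_iff (c : Qbar ≃ₐ[ℚ] Qbar) (hcc : c * c = 1)
    {L : IntermediateField ℚ Qbar} {T : Finset (↥L →+* Qbar)}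
    (hT : IsLiftedCMType c L ↑T) :
    ∀ σ, σ ∈ T ↔ gact c σ ∉ T := by
  obtain ⟨K, hKL, ΦK, _, hΦ, hTeq⟩ := hT
  intro σ
  have m : ∀ ρ : ↥L →+* Qbar, ρ ∈ T ↔ ρ.comp (incl hKL) ∈ ΦK := by
    intro ρ; rw [← Finset.mem_coe, hTeq]; exact Iff.rfl
  rw [m, m, comp_incl]
  exact memK_iff c hcc hΦ _

theorem lifted_cross (c : Qbar ≃ₐ[ℚ] Qbar) (hcc : c * c = 1)
    {L : IntermediateField ℚ Qbar} {T : Finset (↥L →+* Qbar)}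
    (hT : IsLiftedCMType c L ↑T) (τ : Qbar ≃ₐ[ℚ] Qbar) :
    ∀ σ₁ σ₂, σ₁ ∈ T → σ₂ ∈ T → gact τ σ₁ = gact c (gact τ σ₂) → False := by
  obtain ⟨K, hKL, ΦK, ⟨cK, _, hcK⟩, hΦ, hTeq⟩ := hT
  intro σ₁ σ₂ h₁ h₂ h
  have m : ∀ ρ : ↥L →+* Qbar, ρ ∈ T ↔ ρ.comp (incl hKL) ∈ ΦK := by
    intro ρ; rw [← Finset.mem_coe, hTeq]; exact Iff.rfl
  have hr := congrArg (fun ρ : ↥L →+* Qbar => ρ.comp (incl hKL)) h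
  simp only [comp_incl] at hr
  rw [gact_c_comm c hcK] at hr
  have e := gact_inj τ hr
  have k₁ : σ₁.comp (incl hKL) ∈ ΦK := (m σ₁).mp h₁
  have k₂ : σ₂.comp (incl hKL) ∈ ΦK := (m σ₂).mp h₂
  exact (memK_iff c hcc hΦ _).mp k₂ (e ▸ k₁)

theorem isCMType_of_mem_iff (c : Qbar ≃ₐ[ℚ] Qbar) (hcc : c * c = 1)
    {K : IntermediateField ℚ Qbar} {S : Set (↥K →+* Qbar)}
    (h : ∀ φ, φ ∈ S ↔ gact c φ ∉ S) : IsCMType c S := by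
  have gcc : ∀ φ : ↥K →+* Qbar, gact c (gact c φ) = φ := fun φ => by
    rw [gact_gact, hcc, gact_one]
  constructor
  · ext φ
    simp only [Set.mem_inter_iff, Set.mem_empty_iff_false, iff_false, not_and]
    rintro hφ ⟨ψ, hψ, rfl⟩
    exact (h ψ).mp hψ hφ
  · ext φ
    simp only [Set.mem_union, Set.mem_univ, iff_true]
    by_cases hφ : φ ∈ S
    · exact Or.inl hφ
    · have hc : gact c φ ∈ S := by
        by_contra hcφ; exact hφ ((h φ).mpr hcφ)
      exact Or.inr ⟨gact c φ, hc, gcc φ⟩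

theorem lifted_image (c : Qbar ≃ₐ[ℚ] Qbar) (hcc : c * c = 1)
    {L : IntermediateField ℚ Qbar} {T : Finset (↥L →+* Qbar)}
    (hT : IsLiftedCMType c L ↑T) (τ : Qbar ≃ₐ[ℚ] Qbar) :
    IsLiftedCMType c L ↑(T.image (gact τ)) := by
  obtain ⟨K, hKL, ΦK, ⟨cK, hcK0, hcK⟩, hΦ, hTeq⟩ := hT
  have memK := memK_iff c hcc hΦ
  have m : ∀ ρ : ↥L →+* Qbar, ρ ∈ T ↔ ρ.comp (incl hKL) ∈ ΦK := by
    intro ρ; rw [← Finset.mem_coe, hTeq]; exact Iff.rfl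
  refine ⟨K, hKL, gact τ '' ΦK, ⟨cK, hcK0, hcK⟩, ?_, ?_⟩
  · apply isCMType_of_mem_iff c hcc
    intro φ
    constructor
    · rintro ⟨φ₁, h₁, rfl⟩ ⟨φ₂, h₂, heq⟩
      rw [gact_c_comm c hcK] at heq
      have e := gact_inj τ heq
      exact (memK φ₁).mp h₁ (e ▸ h₂)
    · intro hcφ
      by_contra hφ
      have h5 : gact τ⁻¹ φ ∉ ΦK := fun hh =>
        hφ ⟨gact τ⁻¹ φ, hh, by rw [gact_gact, mul_inv_cancel, gact_one]⟩
      have h6 : gact c (gact τ⁻¹ φ) ∈ ΦK := by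
        by_contra h7; exact h5 ((memK _).mpr h7)
      exact hcφ ⟨gact c (gact τ⁻¹ φ), h6, by
        rw [← gact_c_comm c hcK, gact_cancel']⟩
  · ext σ
    simp only [Finset.coe_image, Set.mem_image, Finset.mem_coe, liftType,
      Set.mem_setOf_eq]
    constructor
    · rintro ⟨σ', hσ', rfl⟩
      exact ⟨σ'.comp (incl hKL), (m σ').mp hσ', (comp_incl hKL τ σ').symm⟩
    · rintro ⟨φ, hφ, hφeq⟩
      refine ⟨gact τ⁻¹ σ, (m _).mpr ?_, by rw [gact_gact, mul_inv_cancel, gact_one]⟩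
      rw [comp_incl, ← hφeq, gact_cancel]
      exact hφ

/-- the representative in `T` of the conjugation orbit of `σ` -/
noncomputable def rep (c : Qbar ≃ₐ[ℚ] Qbar) {L : IntermediateField ℚ Qbar}
    (T : Finset (↥L →+* Qbar)) (σ : ↥L →+* Qbar) : ↥L →+* Qbar :=
  if σ ∈ T then σ else gact c σ

theorem epsFun_eq_rep (c τ : Qbar ≃ₐ[ℚ] Qbar) {L : IntermediateField ℚ Qbar}
    (T : Finset (↥L →+* Qbar)) (σ : ↥L →+* Qbar) :
    epsFun c τ T σ = rep c T (gact τ σ) := rfl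

theorem rep_pos (c : Qbar ≃ₐ[ℚ] Qbar) {L : IntermediateField ℚ Qbar}
    {T : Finset (↥L →+* Qbar)} {σ : ↥L →+* Qbar} (h : σ ∈ T) :
    rep c T σ = σ := if_pos h

theorem rep_neg (c : Qbar ≃ₐ[ℚ] Qbar) {L : IntermediateField ℚ Qbar}
    {T : Finset (↥L →+* Qbar)} {σ : ↥L →+* Qbar} (h : σ ∉ T) :
    rep c T σ = gact c σ := if_neg h

theorem rep_mem (c : Qbar ≃ₐ[ℚ] Qbar) {L : IntermediateField ℚ Qbar}
    {T : Finset (↥L →+* Qbar)} (h1 : ∀ σ, σ ∈ T ↔ gact c σ ∉ T)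
    (σ : ↥L →+* Qbar) : rep c T σ ∈ T := by
  unfold rep; split_ifs with h
  · exact h
  · by_contra hh; exact h ((h1 σ).mpr hh)

theorem rep_c (c : Qbar ≃ₐ[ℚ] Qbar) (hcc : c * c = 1) {L : IntermediateField ℚ Qbar}
    {T : Finset (↥L →+* Qbar)} (h1 : ∀ σ, σ ∈ T ↔ gact c σ ∉ T)
    (σ : ↥L →+* Qbar) : rep c T (gact c σ) = rep c T σ := by
  by_cases h : σ ∈ T
  · have h2 : gact c σ ∉ T := (h1 σ).mp h
    rw [rep_neg c h2, rep_pos c h, gact_gact, hcc, gact_one]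
  · have h2 : gact c σ ∈ T := by by_contra hh; exact h ((h1 σ).mpr hh)
    rw [rep_pos c h2, rep_neg c h]

theorem rep_rep (c : Qbar ≃ₐ[ℚ] Qbar) (hcc : c * c = 1) {L : IntermediateField ℚ Qbar}
    {T T' : Finset (↥L →+* Qbar)} (h1' : ∀ σ, σ ∈ T' ↔ gact c σ ∉ T')
    (σ : ↥L →+* Qbar) : rep c T' (rep c T σ) = rep c T' σ := by
  by_cases h : σ ∈ T
  · rw [rep_pos c h]
  · rw [rep_neg c h, rep_c c hcc h1']

theorem exists_eps_perm (c τ : Qbar ≃ₐ[ℚ] Qbar) {L : IntermediateField ℚ Qbar}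
    (T : Finset (↥L →+* Qbar)) (h1 : ∀ σ, σ ∈ T ↔ gact c σ ∉ T)
    (hx : ∀ σ₁ σ₂, σ₁ ∈ T → σ₂ ∈ T → gact τ σ₁ = gact c (gact τ σ₂) → False) :
    ∃ e : Equiv.Perm {x // x ∈ T}, ∀ x : {x // x ∈ T},
      (e x : ↥L →+* Qbar) = epsFun c τ T (x : ↥L →+* Qbar) := by
  have hmem : ∀ x : {x // x ∈ T}, epsFun c τ T ↑x ∈ T := fun x => by
    rw [epsFun_eq_rep]; exact rep_mem c h1 _
  have hinj : Function.Injective (fun x : {x // x ∈ T} =>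
      (⟨epsFun c τ T ↑x, hmem x⟩ : {x // x ∈ T})) := by
    intro a b h
    have h' : epsFun c τ T ↑a = epsFun c τ T ↑b := congrArg Subtype.val h
    unfold epsFun at h'
    apply Subtype.ext
    split_ifs at h' with ha hb hb
    · exact gact_inj τ h'
    · exact (hx ↑a ↑b a.2 b.2 h').elim
    · exact (hx ↑b ↑a b.2 a.2 h'.symm).elim
    · exact gact_inj τ (gact_inj c h')
  refine ⟨Equiv.ofBijective _ (Finite.injective_iff_bijective.mp hinj), fun x => rfl⟩

theorem exists_bridge (c τ₂ : Qbar ≃ₐ[ℚ] Qbar) {L : IntermediateField ℚ Qbar}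
    (Ψ : Finset (↥L →+* Qbar)) (hcc : c * c = 1)
    (h1 : ∀ σ, σ ∈ Ψ ↔ gact c σ ∉ Ψ)
    (h1' : ∀ σ, σ ∈ Ψ.image (gact τ₂) ↔ gact c σ ∉ Ψ.image (gact τ₂)) :
    ∃ b : {x // x ∈ Ψ} ≃ {x // x ∈ Ψ.image (gact τ₂)},
      ∀ x : {x // x ∈ Ψ}, (b x : ↥L →+* Qbar) = rep c (Ψ.image (gact τ₂)) ↑x := by
  have hmem : ∀ x : {x // x ∈ Ψ}, rep c (Ψ.image (gact τ₂)) ↑x ∈ Ψ.image (gact τ₂) :=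
    fun x => rep_mem c h1' _
  set f : {x // x ∈ Ψ} → {x // x ∈ Ψ.image (gact τ₂)} :=
    fun x => ⟨rep c (Ψ.image (gact τ₂)) ↑x, hmem x⟩ with hf
  have hinj : Function.Injective f := by
    intro a b h
    have h' : rep c (Ψ.image (gact τ₂)) ↑a = rep c (Ψ.image (gact τ₂)) ↑b :=
      congrArg Subtype.val h
    unfold rep at h'
    apply Subtype.ext
    split_ifs at h' with ha hb hb
    · exact h'
    · have h3 : gact c (↑a : ↥L →+* Qbar) = ↑b := by
        rw [h', gact_gact, hcc, gact_one]
      exact absurd (h3 ▸ b.2) ((h1 ↑a).mp a.2)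
    · have h3 : gact c (↑b : ↥L →+* Qbar) = ↑a := by
        rw [← h', gact_gact, hcc, gact_one]
      exact absurd (h3 ▸ a.2) ((h1 ↑b).mp b.2)
    · exact gact_inj c h'
  have hcard : Fintype.card {x // x ∈ Ψ} = Fintype.card {x // x ∈ Ψ.image (gact τ₂)} := by
    simp only [Fintype.card_coe]
    exact (Finset.card_image_of_injective Ψ (gact_inj τ₂)).symm
  have hbij : Function.Bijective f :=
    (Fintype.bijective_iff_injective_and_card f).mpr ⟨hinj, hcard⟩
  exact ⟨Equiv.ofBijective f hbij, fun x => rfl⟩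

theorem eps_eq_sign (c τ : Qbar ≃ₐ[ℚ] Qbar) {L : IntermediateField ℚ Qbar}
    (T : Finset (↥L →+* Qbar)) (e : Equiv.Perm {x // x ∈ T})
    (he : ∀ x : {x // x ∈ T}, (e x : ↥L →+* Qbar) = epsFun c τ T (x : ↥L →+* Qbar)) :
    eps c T τ = Equiv.Perm.sign e := by
  have hex : ∃ e' : Equiv.Perm {x // x ∈ T},
      ∀ x : {x // x ∈ T}, (e' x : ↥L →+* Qbar) = epsFun c τ T (x : ↥L →+* Qbar) := ⟨e, he⟩
  rw [eps, dif_pos hex]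
  congr 1
  apply Equiv.ext
  intro x
  apply Subtype.ext
  rw [hex.choose_spec x, he x]

end auxlemmas

theorem statement5
    (Qbar : Type*) [Field Qbar] [Algebra ℚ Qbar] [IsAlgClosure ℚ Qbar]
    -- complex conjugation on `ℚ̄`, via an embedding of `ℚ̄` into `ℂ`
    (emb : Qbar →+* ℂ) (c : Qbar ≃ₐ[ℚ] Qbar)
    (hc : ∀ x : Qbar, emb (c x) = (starRingEnd ℂ) (emb x))
    (L : IntermediateField ℚ Qbar) [FiniteDimensional ℚ L]
    (hLim : TotallyImaginary c L)
    (Ψ : Finset (↥L →+* Qbar)) (hΨ : IsLiftedCMType c L ↑Ψ)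
    (τ₁ τ₂ : Qbar ≃ₐ[ℚ] Qbar) :
    -- `τ₂Ψ` is again a CM-type of `L` lifted from a CM-subfield
    IsLiftedCMType c L ↑(Ψ.image (gact τ₂)) ∧
    -- the cocycle relation for the signs
    eps c Ψ (τ₁ * τ₂) = eps c (Ψ.image (gact τ₂)) τ₁ * eps c Ψ τ₂ := by
  have hcc : c * c = 1 := by
    apply AlgEquiv.ext
    intro x
    apply emb.injective
    rw [AlgEquiv.mul_apply, hc, hc, Complex.conj_conj, AlgEquiv.one_apply]
  have part1 : IsLiftedCMType c L ↑(Ψ.image (gact τ₂)) := lifted_image c hcc hΨ τ₂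
  refine ⟨part1, ?_⟩
  have h1 := lifted_mem_iff c hcc hΨ
  have h1' := lifted_mem_iff c hcc part1
  obtain ⟨eC, heC⟩ := exists_eps_perm c (τ₁ * τ₂) Ψ h1 (lifted_cross c hcc hΨ (τ₁ * τ₂))
  obtain ⟨eA, heA⟩ := exists_eps_perm c τ₂ Ψ h1 (lifted_cross c hcc hΨ τ₂)
  obtain ⟨eB, heB⟩ := exists_eps_perm c τ₁ (Ψ.image (gact τ₂)) h1'
    (lifted_cross c hcc part1 τ₁)
  obtain ⟨b, hb⟩ := exists_bridge c τ₂ Ψ hcc h1 h1'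
  rw [eps_eq_sign c (τ₁ * τ₂) Ψ eC heC, eps_eq_sign c τ₁ (Ψ.image (gact τ₂)) eB heB,
    eps_eq_sign c τ₂ Ψ eA heA]
  have E1 : eC.trans b = (eA.trans b).trans eB := by
    apply Equiv.ext
    intro x
    apply Subtype.ext
    show ((b (eC x) : ↥L →+* Qbar)) = ((eB (b (eA x)) : ↥L →+* Qbar))
    rw [hb (eC x), heC x, heB (b (eA x)), hb (eA x), heA x,
      epsFun_eq_rep, epsFun_eq_rep, epsFun_eq_rep,
      rep_rep c hcc h1', rep_rep c hcc h1',
      rep_pos c (Finset.mem_image_of_mem (gact τ₂) x.2), gact_gact]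
  have E2 : eC = ((eA.trans b).trans eB).trans b.symm := by
    rw [← E1]
    ext x
    simp
  rw [E2]
  have E3 : ((eA.trans b).trans eB).trans b.symm
      = eA.trans ((b.trans eB).trans b.symm) := by
    ext x; simp
  rw [E3]
  have E4 : eA.trans ((b.trans eB).trans b.symm)
      = ((b.trans eB).trans b.symm) * eA := rfl
  rw [E4, map_mul]
  congr 1
  have E5 := Equiv.Perm.sign_symm_trans_trans eB b.symm
  simpa using E5
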